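/- arXiv:2010.03069 — 4 statements merged into one kernel-verified Lean document; each statement's English description precedes it below -/
import Mathlib

section
/- For every positive natural number k, the sum over m from 0 to 2k−1 of binom(2k−1, m)·|2 + 2m − 2k| equals 2k·binom(2k−1, k−1). -/
open Finset

lemma tel (n : ℕ) : ∀ j, ∑ m ∈ range j, (n.choose m : ℤ) * ((n:ℤ) - 2*m) = j * n.choose j := by
  intro j
  induction j with
  | zero => simp
  | succ j ih =>
    rw [sum_range_succ, ih]
    have key : ((j:ℤ)+1) * n.choose (j+1) = n.choose j * ((n:ℤ) - j) := by
      rcases lt_or_ge j n with h1 | h1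
      · have h := Nat.choose_succ_right_eq n j
        have h2 := congrArg (Nat.cast : ℕ → ℤ) h
        push_cast [Nat.cast_sub h1.le] at h2
        linarith
      · rcases eq_or_lt_of_le h1 with h2 | h2
        · subst h2
          simp [Nat.choose_succ_self]
        · simp [Nat.choose_eq_zero_of_lt h2, Nat.choose_eq_zero_of_lt (by omega : n < j+1)]
    push_cast
    linarith [key]

theorem stmt_2 (k : ℕ) (hk : 0 < k) :
    ∑ m ∈ Finset.range (2 * k), ((2 * k - 1).choose m : ℤ) * |2 + 2 * (m : ℤ) - 2 * k| =
      2 * k * ((2 * k - 1).choose (k - 1) : ℤ) := by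
  set n := 2 * k - 1 with hn
  have hnz : (n : ℤ) = 2 * k - 1 := by omega
  have habs : ∀ m : ℕ, ((n.choose m : ℤ)) * |2 + 2 * (m : ℤ) - 2 * k| =
      (n.choose m : ℤ) * (2 + 2 * m - 2 * k) +
        2 * ((n.choose m : ℤ) * max (2 * (k:ℤ) - 2 - 2 * m) 0) := by
    intro m
    rcases le_or_gt 0 (2 + 2 * (m:ℤ) - 2 * k) with h | h
    · rw [abs_of_nonneg h, max_eq_right (by linarith)]; ring
    · rw [abs_of_neg h, max_eq_left (by linarith)]; ring
  rw [Finset.sum_congr rfl (fun m _ => habs m), Finset.sum_add_distrib, ← Finset.mul_sum]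
  -- First sum
  have hT1 : ∑ m ∈ range (2 * k), (n.choose m : ℤ) * (2 + 2 * m - 2 * k) = 2 ^ n := by
    have e1 : ∀ m ∈ range (2*k), (n.choose m : ℤ) * (2 + 2 * m - 2 * k) =
        (n.choose m : ℤ) - (n.choose m : ℤ) * ((n:ℤ) - 2 * m) := by
      intro m _
      rw [hnz]; ring
    rw [Finset.sum_congr rfl e1, Finset.sum_sub_distrib]
    have h2k : 2 * k = n + 1 := by omega
    rw [h2k, tel]
    have hchoose : ∑ m ∈ range (n+1), (n.choose m : ℤ) = 2 ^ n := by
      exact_mod_cast congrArg (Nat.cast : ℕ → ℤ) (Nat.sum_range_choose n)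
    rw [hchoose]
    simp [Nat.choose_succ_self]
  -- Second sum
  have hsub : ∑ m ∈ range (2*k), (n.choose m : ℤ) * max (2*(k:ℤ) - 2 - 2*m) 0
      = ∑ m ∈ range (k-1), (n.choose m : ℤ) * max (2*(k:ℤ) - 2 - 2*m) 0 := by
    symm
    apply Finset.sum_subset (Finset.range_subset_range.mpr (by omega))
    intro m _ hm
    rw [Finset.mem_range, not_lt] at hm
    rw [max_eq_right (by omega)]
    ring
  have e2 : ∀ m ∈ range (k-1), (n.choose m:ℤ) * max (2*(k:ℤ)-2-2*m) 0
      = (n.choose m : ℤ) * ((n:ℤ) - 2*m) - n.choose m := by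
    intro m hm
    rw [Finset.mem_range] at hm
    rw [max_eq_left (by omega), hnz]
    ring
  have hhalf : ∑ m ∈ range k, (n.choose m : ℤ) = 4^(k-1) := by
    have h := Nat.sum_range_choose_halfway (k-1)
    have hk1 : 2*(k-1)+1 = n := by omega
    have hk2 : k - 1 + 1 = k := by omega
    rw [hk1, hk2] at h
    exact_mod_cast congrArg (Nat.cast : ℕ → ℤ) h
  have hsum1 : ∑ m ∈ range (k-1), (n.choose m : ℤ) = 4^(k-1) - n.choose (k-1) := by
    have h : ∑ m ∈ range ((k-1)+1), (n.choose m:ℤ)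
        = ∑ m ∈ range (k-1), (n.choose m:ℤ) + n.choose (k-1) :=
      Finset.sum_range_succ _ _
    rw [show k-1+1 = k from by omega] at h
    linarith [hhalf, h]
  have hT2 : ∑ m ∈ range (2*k), (n.choose m : ℤ) * max (2*(k:ℤ) - 2 - 2*m) 0
      = (k:ℤ) * n.choose (k-1) - 4^(k-1) := by
    rw [hsub, Finset.sum_congr rfl e2, Finset.sum_sub_distrib, tel, hsum1]
    have : ((k-1 : ℕ) : ℤ) = (k:ℤ) - 1 := by push_cast [Nat.cast_sub hk]; ring
    rw [this]
    ring
  rw [hT1, hT2]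
  have hpow : (2:ℤ)^n = 2 * 4^(k-1) := by
    have h : n = 2*(k-1)+1 := by omega
    rw [h, pow_succ, pow_mul]
    norm_num [mul_comm]
  rw [hpow]
  ring
end

section
/- For the cycle graph C_n with n divisible by 4 and all susceptances equal to 1, the set of real solutions to the lossless zero-injection power flow equations is infinite. Explicitly, for each real u, setting θ_k − θ_{k−1} = πu for k in a fixed set of n/2 of the cyclically consecutive edge-differences and θ_k − θ_{k−1} = π(1−u) on the remaining n/2, yields angles θ (with θ₀ = 0) that solve sin(θ_k − θ_{k−1}) = sin(θ_{k+1} − θ_k) for all k, with indices mod n. -/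
theorem aux_stmt7 (n : ℕ) (hn : 0 < n) (h4 : 4 ∣ n)
    (A : Finset ℕ) (hA : A ⊆ Finset.range n) (hcard : A.card = n / 2)
    (u : ℝ) (m : ℕ) :
    Real.sin
        ((∑ j ∈ Finset.range ((m + 1) % n),
            (if j ∈ A then Real.pi * u else Real.pi * (1 - u))) -
          ∑ j ∈ Finset.range (m % n),
            (if j ∈ A then Real.pi * u else Real.pi * (1 - u))) =
      Real.sin (Real.pi * u) := by
  obtain ⟨t, ht⟩ := h4
  set f : ℕ → ℝ := fun j => if j ∈ A then Real.pi * u else Real.pi * (1 - u) with hf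
  have hsinf : ∀ j, Real.sin (f j) = Real.sin (Real.pi * u) := by
    intro j
    by_cases h : j ∈ A
    · simp [hf, h]
    · simp only [hf, if_neg h]
      rw [show Real.pi * (1 - u) = Real.pi - Real.pi * u by ring, Real.sin_pi_sub]
  have hcard' : A.card = 2 * t := by omega
  have hSn : ∑ j ∈ Finset.range n, f j = (t : ℝ) * (2 * Real.pi) := by
    have h1 : ∀ j, f j = (if j ∈ A then (2 * Real.pi * u - Real.pi) else 0)
        + Real.pi * (1 - u) := by
      intro j; by_cases h : j ∈ A <;> simp [hf, h] <;> ring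
    calc ∑ j ∈ Finset.range n, f j
        = ∑ j ∈ Finset.range n,
            ((if j ∈ A then (2 * Real.pi * u - Real.pi) else 0) + Real.pi * (1 - u)) :=
          Finset.sum_congr rfl fun j _ => h1 j
      _ = (∑ j ∈ Finset.range n, if j ∈ A then (2 * Real.pi * u - Real.pi) else 0)
            + n * (Real.pi * (1 - u)) := by
          rw [Finset.sum_add_distrib, Finset.sum_const, Finset.card_range, nsmul_eq_mul]
      _ = (A.card : ℝ) * (2 * Real.pi * u - Real.pi) + n * (Real.pi * (1 - u)) := by
          rw [Finset.sum_ite_mem, Finset.inter_eq_right.mpr hA, Finset.sum_const, nsmul_eq_mul]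
      _ = (t : ℝ) * (2 * Real.pi) := by
          rw [hcard', ht]; push_cast; ring
  have hr : m % n < n := Nat.mod_lt _ hn
  have h1n : 1 % n = 1 := Nat.mod_eq_of_lt (by omega)
  have hmod : (m + 1) % n = (m % n + 1) % n := by rw [Nat.add_mod, h1n]
  rcases eq_or_lt_of_le (Nat.succ_le_of_lt hr) with heq | hlt
  · have heq' : m % n + 1 = n := heq
    have h0 : (m + 1) % n = 0 := by rw [hmod, heq', Nat.mod_self]
    rw [h0]
    have hsplit : ∑ j ∈ Finset.range n, f j
        = (∑ j ∈ Finset.range (m % n), f j) + f (m % n) := by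
      conv_lhs => rw [← heq']
      rw [Finset.sum_range_succ]
    have : (∑ j ∈ Finset.range 0, f j) - ∑ j ∈ Finset.range (m % n), f j
        = f (m % n) - (t : ℝ) * (2 * Real.pi) := by
      rw [Finset.sum_range_zero, ← hSn, hsplit]; ring
    rw [this, Real.sin_periodic.sub_nat_mul_eq t, hsinf]
  · rw [hmod, Nat.mod_eq_of_lt hlt, Finset.sum_range_succ, add_sub_cancel_left, hsinf]

theorem stmt_7 (n : ℕ) (hn : 0 < n) (h4 : 4 ∣ n)
    (A : Finset ℕ) (hA : A ⊆ Finset.range n) (hcard : A.card = n / 2) :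
    (∀ u : ℝ,
      ∀ k < n,
        Real.sin
            ((∑ j ∈ Finset.range ((k + 1) % n),
                (if j ∈ A then Real.pi * u else Real.pi * (1 - u))) -
              ∑ j ∈ Finset.range (k % n),
                (if j ∈ A then Real.pi * u else Real.pi * (1 - u))) =
          Real.sin
            ((∑ j ∈ Finset.range ((k + 2) % n),
                (if j ∈ A then Real.pi * u else Real.pi * (1 - u))) -
              ∑ j ∈ Finset.range ((k + 1) % n),
                (if j ∈ A then Real.pi * u else Real.pi * (1 - u))))
    ∧ {θ : ℕ → ℝ | θ 0 = 0 ∧ (∀ m, n ≤ m → θ m = 0) ∧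
        ∀ k, Real.sin (θ ((k + 1) % n) - θ (k % n)) =
          Real.sin (θ ((k + 2) % n) - θ ((k + 1) % n))}.Infinite := by
  have hn4 : 4 ≤ n := Nat.le_of_dvd hn h4
  constructor
  · intro u k _
    exact (aux_stmt7 n hn h4 A hA hcard u k).trans
      (aux_stmt7 n hn h4 A hA hcard u (k + 1)).symm
  · apply Set.infinite_of_injective_forall_mem
      (f := fun u : ℝ => fun m : ℕ =>
        if n ≤ m then 0 else ∑ j ∈ Finset.range m,
          (if j ∈ A then Real.pi * u else Real.pi * (1 - u)))
    · intro u v huv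
      have h1 : ¬ n ≤ 1 := by omega
      have h := congrFun huv 1
      simp only [if_neg h1, Finset.sum_range_one] at h
      have hpi := Real.pi_ne_zero
      by_cases h0 : 0 ∈ A
      · rw [if_pos h0, if_pos h0] at h
        exact mul_left_cancel₀ hpi h
      · rw [if_neg h0, if_neg h0] at h
        have := mul_left_cancel₀ hpi h
        linarith
    · intro u
      refine ⟨?_, ?_, ?_⟩
      · simp
      · intro m hm; simp [hm]
      · intro k
        have hk1 : (k + 1) % n < n := Nat.mod_lt _ hn
        have hk0 : k % n < n := Nat.mod_lt _ hn
        have hk2 : (k + 2) % n < n := Nat.mod_lt _ hn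
        simp only [if_neg (Nat.not_le.mpr hk1), if_neg (Nat.not_le.mpr hk0),
          if_neg (Nat.not_le.mpr hk2)]
        exact (aux_stmt7 n hn h4 A hA hcard u k).trans
          (aux_stmt7 n hn h4 A hA hcard u (k + 1)).symm
end

section
/- For the complete graph K_n with n ≥ 4 even and all susceptances equal to 1, the family of points defined by x₁ = −1, y₁ = 0, x_{k+1} = −x_k and y_{k+1} = −y_k for all even k ≥ 2, with (x_m, y_m) on the unit circle chosen freely for odd m ≥ 3, gives infinitely many real solutions of the lossless zero-injection power flow equations. -/
/-!
Grouping the vertices into the pairs `(2i, 2i + 1)`, each pair consists of antipodal points of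
the unit circle, so `∑ x_m = ∑ y_m = 0`; the power-flow sum at `k` is
`x_k ∑ y_m - y_k ∑ x_m`, hence vanishes. Letting the free point of the pair `(2, 3)` run over
`(cos θ, sin θ)`, `θ ∈ [0, π]`, gives infinitely many solutions, told apart by `x₂ = cos θ`.
-/

open Finset Real

lemma sum_range_two_mul_eq_zero {M : Type*} [AddCommGroup M] {f : ℕ → M} (t : ℕ)
    (hf : ∀ i < t, f (2 * i + 1) = -f (2 * i)) : ∑ m ∈ range (2 * t), f m = 0 := by
  induction t with
  | zero => simp
  | succ t ih =>
    rw [Nat.mul_succ, sum_range_succ, sum_range_succ, ih fun i hi => hf i (by omega),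
      hf t t.lt_succ_self, zero_add, add_neg_cancel]

lemma sum_range_eq_zero_of_even {M : Type*} [AddCommGroup M] {f : ℕ → M} {n : ℕ}
    (hn : Even n) (hf : ∀ k, Even k → k + 1 < n → f (k + 1) = -f k) :
    ∑ m ∈ range n, f m = 0 := by
  obtain ⟨t, rfl⟩ := hn
  rw [← two_mul]
  exact sum_range_two_mul_eq_zero t fun i hi => hf (2 * i) (even_two_mul i) (by omega)

lemma sum_mul_sub_mul_eq_zero {ι R : Type*} [CommRing R] {s : Finset ι} {x y : ι → R}
    (hx : ∑ m ∈ s, x m = 0) (hy : ∑ m ∈ s, y m = 0) (a b : R) :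
    ∑ m ∈ s, (a * y m - x m * b) = 0 := by
  rw [sum_sub_distrib, ← mul_sum, ← sum_mul, hx, hy, mul_zero, zero_mul, sub_zero]

/-- The sequence `u 0, -u 0, u 1, -u 1, u 2, -u 2, …`. -/
def pairSeq {R : Type*} [CommRing R] (u : ℕ → R) (m : ℕ) : R := (-1) ^ m * u (m / 2)

section pairSeq

variable {R : Type*} [CommRing R] (u : ℕ → R)

lemma pairSeq_two_mul (i : ℕ) : pairSeq u (2 * i) = u i := by
  simp [pairSeq]

lemma pairSeq_two_mul_add_one (i : ℕ) : pairSeq u (2 * i + 1) = -u i := by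
  simp [pairSeq, pow_succ, Nat.mul_add_div]

lemma pairSeq_succ_of_even {k : ℕ} (hk : Even k) : pairSeq u (k + 1) = -pairSeq u k := by
  obtain ⟨i, rfl⟩ := hk
  rw [← two_mul, pairSeq_two_mul, pairSeq_two_mul_add_one]

lemma pairSeq_sq_add_sq (v : ℕ → R) (m : ℕ) :
    pairSeq u m ^ 2 + pairSeq v m ^ 2 = u (m / 2) ^ 2 + v (m / 2) ^ 2 := by
  simp [pairSeq, mul_pow, ← pow_mul, pow_mul']

end pairSeq

/-- A one-parameter subfamily: the free point of the pair `(2, 3)` is `(cos θ, sin θ)`,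
every later pair is `(1, 0), (-1, 0)`. -/
noncomputable def circleX (θ : ℝ) : ℕ → ℝ := pairSeq fun j => if j = 1 then cos θ else 1

noncomputable def circleY (θ : ℝ) : ℕ → ℝ := pairSeq fun j => if j = 1 then sin θ else 0

lemma circleX_two (θ : ℝ) : circleX θ 2 = cos θ := by
  simp [circleX, pairSeq]

lemma circleX_sq_add_circleY_sq (θ : ℝ) (m : ℕ) : circleX θ m ^ 2 + circleY θ m ^ 2 = 1 := by
  rw [circleX, circleY, pairSeq_sq_add_sq]
  split_ifs <;> simp [cos_sq_add_sin_sq]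

theorem stmt_11 (n : ℕ) (hn : 4 ≤ n) (heven : Even n)
    (x y : ℕ → ℝ) (hx0 : x 0 = 1) (hy0 : y 0 = 0)
    (hx1 : x 1 = -1) (hy1 : y 1 = 0)
    (hpair : ∀ k, Even k → 2 ≤ k → k + 1 ≤ n - 1 →
      x (k + 1) = -x k ∧ y (k + 1) = -y k)
    (hcirc : ∀ m, m ≤ n - 1 → x m ^ 2 + y m ^ 2 = 1) :
    (∀ k, 1 ≤ k → k ≤ n - 1 →
      x k ^ 2 + y k ^ 2 = 1 ∧
      ∑ m ∈ Finset.range n, (x k * y m - x m * y k) = 0)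
    ∧ {p : (Fin n → ℝ) × (Fin n → ℝ) |
        ∃ x' y' : ℕ → ℝ,
          (∀ i : Fin n, p.1 i = x' i ∧ p.2 i = y' i) ∧
          x' 0 = 1 ∧ y' 0 = 0 ∧ x' 1 = -1 ∧ y' 1 = 0 ∧
          (∀ k, Even k → 2 ≤ k → k + 1 ≤ n - 1 →
            x' (k + 1) = -x' k ∧ y' (k + 1) = -y' k) ∧
          (∀ m, m ≤ n - 1 → x' m ^ 2 + y' m ^ 2 = 1) ∧
          (∀ k, 1 ≤ k → k ≤ n - 1 →
            ∑ m ∈ Finset.range n, (x' k * y' m - x' m * y' k) = 0)}.Infinite := by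
  have hpair' : ∀ k, Even k → k + 1 < n → x (k + 1) = -x k ∧ y (k + 1) = -y k := by
    rintro (_ | _ | k) hk hkn
    · simp [hx0, hx1, hy0, hy1]
    · exact absurd hk Nat.not_even_one
    · exact hpair _ hk (by omega) (by omega)
  refine ⟨fun k _ hk => ⟨hcirc k hk, sum_mul_sub_mul_eq_zero
    (sum_range_eq_zero_of_even heven fun k hk hkn => (hpair' k hk hkn).1)
    (sum_range_eq_zero_of_even heven fun k hk hkn => (hpair' k hk hkn).2) _ _⟩, ?_⟩
  refine Set.infinite_of_injOn_mapsTo (s := Set.Icc 0 π)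
    (f := fun θ => (fun i : Fin n => circleX θ i, fun i : Fin n => circleY θ i))
    (fun a ha b hb hab => injOn_cos ha hb ?_) (fun θ _ => ?_) (Set.Icc_infinite pi_pos)
  · simpa [circleX_two] using congrFun (congrArg Prod.fst hab) ⟨2, by omega⟩
  · have hX : ∀ k, Even k → circleX θ (k + 1) = -circleX θ k := fun k => pairSeq_succ_of_even _
    have hY : ∀ k, Even k → circleY θ (k + 1) = -circleY θ k := fun k => pairSeq_succ_of_even _
    refine ⟨circleX θ, circleY θ, fun i => ⟨rfl, rfl⟩, by simp [circleX, pairSeq],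
      by simp [circleY, pairSeq], by simp [circleX, pairSeq], by simp [circleY, pairSeq],
      fun k hk _ _ => ⟨hX k hk, hY k hk⟩, fun m _ => circleX_sq_add_circleY_sq θ m,
      fun k _ _ => sum_mul_sub_mul_eq_zero ?_ ?_ _ _⟩
    · exact sum_range_eq_zero_of_even heven fun k hk _ => hX k hk
    · exact sum_range_eq_zero_of_even heven fun k hk _ => hY k hk
end

section
/- Let T be a finite tree on vertices {0,…,n−1} with n ≥ 2, and let b_e ≠ 0 for each edge e. If angles θ₀ = 0, θ₁,…,θ_{n−1} ∈ ℝ satisfy, for each vertex k = 1,…,n−1, Σ_{m adjacent to k} b_{km} sin(θ_k − θ_m) = 0, then sin(θ_k − θ_m) = 0 for every edge {k, m} of T; consequently every θ_k is an integer multiple of π. -/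
/-!
The terms `b k m * sin (θ k - θ m)` form an antisymmetric flow on the edges of the tree, and
the hypothesis says it is conserved at every vertex except `0`. Since the divergences of an
antisymmetric flow always sum to zero, it is conserved at `0` as well. Summing the divergence
over one side of a bridge leaves only the flow through the bridge, so a conserved flow vanishes
on every bridge, i.e. on every edge of a tree. As `b` is nonzero on edges, `sin (θ k - θ m) = 0`
there, so neighbouring angles differ by a multiple of `π`, and connectedness propagates this
from `θ 0 = 0` to all vertices.
-/

open Finset Real

theorem Finset.sum_sum_eq_zero_of_antisymm {ι M : Type*} [AddCommGroup M] [IsAddTorsionFree M]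
    (s : Finset ι) {f : ι → ι → M} (hf : ∀ x y, f x y = -f y x) :
    ∑ x ∈ s, ∑ y ∈ s, f x y = 0 := by
  refine self_eq_neg.mp ?_
  calc ∑ x ∈ s, ∑ y ∈ s, f x y = ∑ y ∈ s, ∑ x ∈ s, f x y := sum_comm
    _ = -∑ y ∈ s, ∑ x ∈ s, f y x := by
      rw [← sum_neg_distrib]
      exact sum_congr rfl fun y _ => by
        rw [← sum_neg_distrib]
        exact sum_congr rfl fun x _ => hf x y

namespace SimpleGraph

variable {V M : Type*} [Fintype V] [DecidableEq V] [AddCommGroup M] [IsAddTorsionFree M]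
  (G : SimpleGraph V) [DecidableRel G.Adj] {f : V → V → M}

theorem sum_sum_adj_eq_sum_sum_adj_compl (hf : ∀ x y, f x y = -f y x) (S : Finset V) :
    ∑ x ∈ S, ∑ y ∈ univ.filter (G.Adj x), f x y =
      ∑ x ∈ S, ∑ y ∈ Sᶜ.filter (G.Adj x), f x y := by
  set g : V → V → M := fun x y => if G.Adj x y then f x y else 0
  have hg : ∀ x y, g x y = -g y x := by
    intro x y
    simp only [g, G.adj_comm y x]
    split_ifs
    exacts [hf x y, neg_zero.symm]
  calc ∑ x ∈ S, ∑ y ∈ univ.filter (G.Adj x), f x y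
      = ∑ x ∈ S, ∑ y ∈ S, g x y + ∑ x ∈ S, ∑ y ∈ Sᶜ, g x y := by
        simp only [← sum_add_distrib, sum_add_sum_compl, g, sum_filter]
    _ = ∑ x ∈ S, ∑ y ∈ Sᶜ.filter (G.Adj x), f x y := by
        simp only [sum_sum_eq_zero_of_antisymm S hg, zero_add, g, sum_filter]

theorem sum_adj_eq_zero_of_forall_ne (hf : ∀ x y, f x y = -f y x) (v₀ : V)
    (hdiv : ∀ x, x ≠ v₀ → ∑ y ∈ univ.filter (G.Adj x), f x y = 0) (x : V) :
    ∑ y ∈ univ.filter (G.Adj x), f x y = 0 := by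
  by_cases hx : x = v₀
  · subst hx
    have htotal := G.sum_sum_adj_eq_sum_sum_adj_compl hf univ
    simpa only [compl_univ, filter_empty, sum_empty, sum_const_zero,
      sum_eq_single x fun y _ hy => hdiv y hy, mem_univ, not_true_eq_false,
      IsEmpty.forall_iff] using htotal
  · exact hdiv x hx

theorem eq_zero_of_isBridge (hf : ∀ x y, f x y = -f y x)
    (hdiv : ∀ x, ∑ y ∈ univ.filter (G.Adj x), f x y = 0) {k m : V} (hadj : G.Adj k m)
    (hbridge : G.IsBridge s(k, m)) : f k m = 0 := by
  set S := univ.filter ((G.deleteEdges {s(k, m)}).Reachable m)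
  have hmS : m ∈ S := by simp [S]
  have hkS : k ∉ S := by simpa [S, reachable_comm] using isBridge_iff.mp hbridge
  -- The only edge leaving the component of `m` in `G` minus the bridge is the bridge.
  have hcut : ∀ x ∈ S, ∀ y ∉ S, G.Adj x y → x = m ∧ y = k := by
    intro x hx y hy hxy
    by_cases he : s(x, y) = s(k, m)
    · rcases Sym2.eq_iff.mp he with ⟨rfl, rfl⟩ | h
      exacts [absurd hx hkS, h]
    · refine absurd ?_ hy
      simp only [S, mem_filter, mem_univ, true_and] at hx ⊢
      exact hx.trans (deleteEdges_adj.mpr ⟨hxy, he⟩).reachable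
  have hout : ∑ x ∈ S, ∑ y ∈ Sᶜ.filter (G.Adj x), f x y = f m k := by
    rw [sum_eq_single_of_mem m hmS, sum_eq_single_of_mem k (by simp [hkS, hadj.symm])]
    · intro y hy hyk
      simp only [mem_filter, mem_compl] at hy
      exact absurd (hcut m hmS y hy.1 hy.2).2 hyk
    · intro x hx hxm
      refine sum_eq_zero fun y hy => ?_
      simp only [mem_filter, mem_compl] at hy
      exact absurd (hcut x hx y hy.1 hy.2).1 hxm
  have hin : ∑ x ∈ S, ∑ y ∈ univ.filter (G.Adj x), f x y = 0 :=
    sum_eq_zero fun x _ => hdiv x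
  rw [hf, ← hout, ← G.sum_sum_adj_eq_sum_sum_adj_compl hf, hin, neg_zero]

end SimpleGraph

theorem exists_int_mul_pi_of_reachable {V : Type*} {G : SimpleGraph V} {θ : V → ℝ}
    (hθ : ∀ x y, G.Adj x y → sin (θ x - θ y) = 0) {u v : V} (huv : G.Reachable u v)
    (hu : ∃ z : ℤ, θ u = z * π) : ∃ z : ℤ, θ v = z * π := by
  rw [SimpleGraph.reachable_iff_reflTransGen] at huv
  induction huv with
  | refl => exact hu
  | tail _ hadj ih =>
    obtain ⟨z, hz⟩ := ih
    obtain ⟨w, hw⟩ := sin_eq_zero_iff.mp (hθ _ _ hadj)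
    exact ⟨z - w, by push_cast; linarith⟩

theorem stmt_13 (n : ℕ) (hn : 2 ≤ n) (G : SimpleGraph (Fin n))
    [DecidableRel G.Adj] (hT : G.IsTree)
    (b : Fin n → Fin n → ℝ) (hsym : ∀ k m, b k m = b m k)
    (hbne : ∀ k m, G.Adj k m → b k m ≠ 0)
    (θ : Fin n → ℝ) (hθ0 : θ ⟨0, by omega⟩ = 0)
    (hbal : ∀ k : Fin n, k ≠ ⟨0, by omega⟩ →
      ∑ m ∈ Finset.univ.filter (fun m => G.Adj k m),
        b k m * Real.sin (θ k - θ m) = 0) :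
    (∀ k m, G.Adj k m → Real.sin (θ k - θ m) = 0) ∧
      ∀ k, ∃ z : ℤ, θ k = z * Real.pi := by
  have hanti : ∀ k m, b k m * sin (θ k - θ m) = -(b m k * sin (θ m - θ k)) := by
    intro k m
    rw [hsym k m, ← neg_sub (θ m), sin_neg, mul_neg]
  have hdiv := G.sum_adj_eq_zero_of_forall_ne hanti _ hbal
  have hedge : ∀ k m, G.Adj k m → sin (θ k - θ m) = 0 := fun k m hkm =>
    (mul_eq_zero.mp (G.eq_zero_of_isBridge hanti hdiv hkm
      (SimpleGraph.isAcyclic_iff_forall_adj_isBridge.mp hT.isAcyclic hkm))).resolve_left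
      (hbne k m hkm)
  exact ⟨hedge, fun k => exists_int_mul_pi_of_reachable hedge
    (hT.connected.preconnected ⟨0, by omega⟩ k) ⟨0, by simp [hθ0]⟩⟩
end
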